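/- arXiv:1506.02519 — 7 statements merged into one kernel-verified Lean document; each statement's English description precedes it below -/
import Mathlib

section
/- Let X be an inner product module over a C*-algebra A, e ∈ X with ⟨e,e⟩ idempotent, and G_e(x,y) := ⟨x,y⟩ − ⟨x,e⟩⟨e,y⟩. Then for every a ∈ A and x ∈ X: G_e(x,x) ≤ ⟨x − ea, x − ea⟩. -/
/-!
With `p = ⟨e, e⟩` a projection, `⟨e - ep, e - ep⟩ = p - 2p² + p³ = 0`, so `e = ep` and hence
`p⟨e, x⟩ = ⟨e, x⟩`. Using this, the defect `⟨x - ea, x - ea⟩ - G_e(x, x)` is the square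
`(⟨e, x⟩ - pa)* (⟨e, x⟩ - pa)`, which is positive.
-/

theorem IsStarProjection.star_sub_mul_mul_sub_mul {R : Type*} [Ring R] [StarRing R] {p b : R}
    (hp : IsStarProjection p) (hpb : p * b = b) (a : R) :
    star (b - p * a) * (b - p * a) = star b * b - star b * a - star a * b + star a * (p * a) := by
  have hbp : star b * p = star b := by
    simpa only [star_mul, hp.isSelfAdjoint.star_eq] using congrArg star hpb
  rw [star_sub, star_mul, hp.isSelfAdjoint.star_eq]
  calc (star b - star a * p) * (b - p * a)
      = star b * b - (star b * p) * a - star a * (p * b) + star a * ((p * p) * a) := by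
        noncomm_ring
    _ = _ := by rw [hbp, hpb, hp.isIdempotentElem.eq]

namespace InnerModule

variable {A X : Type*} (inner : X → X → A) (smul : X → A → X)

theorem inner_sub_right [AddGroup X] [AddGroup A]
    (h_add : ∀ x y z : X, inner x (y + z) = inner x y + inner x z)
    (x y z : X) : inner x (y - z) = inner x y - inner x z :=
  (AddMonoidHom.mk' (inner x) (h_add x)).map_sub y z

theorem inner_sub_left [AddGroup X] [AddGroup A] [StarAddMonoid A]
    (h_add : ∀ x y z : X, inner x (y + z) = inner x y + inner x z)
    (h_star : ∀ x y : X, star (inner x y) = inner y x) (x y z : X) :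
    inner (x - y) z = inner x z - inner y z := by
  rw [← h_star, inner_sub_right inner h_add, star_sub, h_star, h_star]

theorem inner_smul_left [Monoid A] [StarMul A]
    (h_smul : ∀ (x y : X) (a : A), inner x (smul y a) = inner x y * a)
    (h_star : ∀ x y : X, star (inner x y) = inner y x) (x y : X) (a : A) :
    inner (smul x a) y = star a * inner x y := by
  rw [← h_star, h_smul, star_mul, h_star]

theorem inner_sub_smul_sub_smul [Ring A] [StarRing A] [AddGroup X]
    (h_add : ∀ x y z : X, inner x (y + z) = inner x y + inner x z)
    (h_smul : ∀ (x y : X) (a : A), inner x (smul y a) = inner x y * a)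
    (h_star : ∀ x y : X, star (inner x y) = inner y x) (x e : X) (a : A) :
    inner (x - smul e a) (x - smul e a)
      = inner x x - inner x e * a - star a * inner e x + star a * (inner e e * a) := by
  rw [inner_sub_right inner h_add, inner_sub_left inner h_add h_star,
    inner_sub_left inner h_add h_star, h_smul, h_smul, inner_smul_left inner smul h_smul h_star,
    inner_smul_left inner smul h_smul h_star, mul_assoc]
  abel

theorem smul_inner_self_eq_self [Ring A] [StarRing A] [AddGroup X]
    (h_add : ∀ x y z : X, inner x (y + z) = inner x y + inner x z)
    (h_smul : ∀ (x y : X) (a : A), inner x (smul y a) = inner x y * a)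
    (h_star : ∀ x y : X, star (inner x y) = inner y x)
    (h_nondeg : ∀ x : X, inner x x = 0 → x = 0) {e : X} (he : IsStarProjection (inner e e)) :
    smul e (inner e e) = e := by
  have hzero : inner (e - smul e (inner e e)) (e - smul e (inner e e)) = 0 := by
    rw [inner_sub_smul_sub_smul inner smul h_add h_smul h_star, he.isSelfAdjoint.star_eq,
      he.isIdempotentElem.eq, he.isIdempotentElem.eq]
    abel
  exact (sub_eq_zero.mp (h_nondeg _ hzero)).symm

theorem inner_self_mul_inner [Ring A] [StarRing A] [AddGroup X]
    (h_add : ∀ x y z : X, inner x (y + z) = inner x y + inner x z)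
    (h_smul : ∀ (x y : X) (a : A), inner x (smul y a) = inner x y * a)
    (h_star : ∀ x y : X, star (inner x y) = inner y x)
    (h_nondeg : ∀ x : X, inner x x = 0 → x = 0) {e : X} (he : IsStarProjection (inner e e))
    (x : X) : inner e e * inner e x = inner e x := by
  conv_rhs => rw [← smul_inner_self_eq_self inner smul h_add h_smul h_star h_nondeg he]
  rw [inner_smul_left inner smul h_smul h_star, he.isSelfAdjoint.star_eq]

end InnerModule

theorem stmt2_general {A X : Type*} [CStarAlgebra A] [PartialOrder A] [StarOrderedRing A]
    [AddCommGroup X]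
    (inner : X → X → A) (smul : X → A → X)
    (h_add : ∀ x y z : X, inner x (y + z) = inner x y + inner x z)
    (h_smul : ∀ (x y : X) (a : A), inner x (smul y a) = inner x y * a)
    (h_star : ∀ x y : X, star (inner x y) = inner y x)
    (h_nondeg : ∀ x : X, inner x x = 0 → x = 0)
    (e : X) (h_idem : inner e e * inner e e = inner e e) :
    ∀ (a : A) (x : X),
      inner x x - inner x e * inner e x ≤ inner (x - smul e a) (x - smul e a) := by
  intro a x
  have he : IsStarProjection (inner e e) := ⟨h_idem, h_star e e⟩
  have hdefect : inner (x - smul e a) (x - smul e a) - (inner x x - inner x e * inner e x)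
      = star (inner e x - inner e e * a) * (inner e x - inner e e * a) := by
    have hpb := InnerModule.inner_self_mul_inner inner smul h_add h_smul h_star h_nondeg he x
    rw [he.star_sub_mul_mul_sub_mul hpb, h_star,
      InnerModule.inner_sub_smul_sub_smul inner smul h_add h_smul h_star]
    abel
  rw [← sub_nonneg, hdefect]
  exact star_mul_self_nonneg _

/-- If `⟨e,e⟩` is idempotent then `G_e(x,x) ≤ ⟨x - ea, x - ea⟩` for every `a ∈ A`. -/
theorem stmt2 {A X : Type*} [CStarAlgebra A] [PartialOrder A] [StarOrderedRing A]
    [AddCommGroup X]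
    (inner : X → X → A) (smul : X → A → X)
    (h_add : ∀ x y z : X, inner x (y + z) = inner x y + inner x z)
    (h_smul : ∀ (x y : X) (a : A), inner x (smul y a) = inner x y * a)
    (h_star : ∀ x y : X, star (inner x y) = inner y x)
    (h_pos : ∀ x : X, 0 ≤ inner x x)
    (h_nondeg : ∀ x : X, inner x x = 0 → x = 0)
    (e : X) (h_idem : inner e e * inner e e = inner e e) :
    ∀ (a : A) (x : X),
      inner x x - inner x e * inner e x ≤ inner (x - smul e a) (x - smul e a) :=
  stmt2_general inner smul h_add h_smul h_star h_nondeg e h_idem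
end

section
/- Let X be an inner product module over a C*-algebra A, e ∈ X with ⟨e,e⟩ idempotent. Then for all x,y ∈ X and a,b,c,d ∈ A: |⟨x,y⟩ − ⟨x,e⟩⟨e,y⟩|² ≤ ‖x − e((a+b)/2)‖² · |y − e((c+d)/2)|², where for z ∈ X, |z| := ⟨z,z⟩^{1/2} ∈ A and ‖z‖ := ‖⟨z,z⟩‖^{1/2}. -/
/-!
Put `u = x - e α`, `v = y - e β` and `w = v - e ⟨e, v⟩`. Since `⟨e, e⟩` is idempotent,
`⟨e - e ⟨e, e⟩, e - e ⟨e, e⟩⟩ = 0`, so `e ⟨e, e⟩ = e`; hence `⟨e, w⟩ = 0` and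
`⟨u, w⟩ = ⟨x, y⟩ - ⟨x, e⟩ ⟨e, y⟩` whatever `α` and `β` are. Cauchy–Schwarz for `u, w` and
`⟨w, w⟩ = ⟨v, v⟩ - ⟨v, e⟩ ⟨e, v⟩ ≤ ⟨v, v⟩` finish the proof.
-/

structure IsInnerProductModule {A X : Type*} [CStarAlgebra A] [PartialOrder A] [AddCommGroup X]
    (inner : X → X → A) (smul : X → A → X) : Prop where
  inner_add_right : ∀ x y z : X, inner x (y + z) = inner x y + inner x z
  inner_smul_right : ∀ (x y : X) (a : A), inner x (smul y a) = inner x y * a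
  star_inner : ∀ x y : X, star (inner x y) = inner y x
  inner_self_nonneg : ∀ x : X, 0 ≤ inner x x
  eq_zero_of_inner_self_eq_zero : ∀ x : X, inner x x = 0 → x = 0

namespace IsInnerProductModule

variable {A X : Type*} [CStarAlgebra A] [PartialOrder A] [AddCommGroup X]
  {inner : X → X → A} {smul : X → A → X} (hX : IsInnerProductModule inner smul)
include hX

theorem inner_sub_right (x y z : X) : inner x (y - z) = inner x y - inner x z :=
  (AddMonoidHom.mk' (inner x) (hX.inner_add_right x)).map_sub y z

theorem inner_sub_left (x y z : X) : inner (x - y) z = inner x z - inner y z := by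
  rw [← hX.star_inner, hX.inner_sub_right, star_sub, hX.star_inner, hX.star_inner]

theorem inner_zero_left (x : X) : inner 0 x = 0 := by
  simpa using hX.inner_sub_left 0 0 x

theorem inner_smul_left (x y : X) (a : A) : inner (smul x a) y = star a * inner x y := by
  rw [← hX.star_inner, hX.inner_smul_right, star_mul, hX.star_inner]

theorem inner_sub_smul_inner_right (e x y : X) :
    inner x (y - smul e (inner e y)) = inner x y - inner x e * inner e y := by
  rw [hX.inner_sub_right, hX.inner_smul_right]

section Idempotent

variable {e : X} (he : IsIdempotentElem (inner e e))
include he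

theorem smul_inner_self_of_isIdempotentElem : smul e (inner e e) = e := by
  have hsa : star (inner e e) = inner e e := hX.star_inner e e
  refine (sub_eq_zero.mp (hX.eq_zero_of_inner_self_eq_zero _ ?_)).symm
  simp only [hX.inner_sub_left, hX.inner_sub_right, hX.inner_smul_left, hX.inner_smul_right, hsa,
    he.eq, sub_self]

theorem inner_mul_inner_self_of_isIdempotentElem (x : X) : inner x e * inner e e = inner x e := by
  rw [← hX.inner_smul_right, hX.smul_inner_self_of_isIdempotentElem he]

theorem inner_self_mul_inner_of_isIdempotentElem (x : X) : inner e e * inner e x = inner e x := by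
  simpa only [star_mul, hX.star_inner] using
    congrArg star (hX.inner_mul_inner_self_of_isIdempotentElem he x)

theorem inner_sub_smul_inner_eq_zero (y : X) : inner e (y - smul e (inner e y)) = 0 := by
  rw [hX.inner_sub_smul_inner_right, hX.inner_self_mul_inner_of_isIdempotentElem he, sub_self]

theorem inner_sub_smul_inner_self (y : X) :
    inner (y - smul e (inner e y)) (y - smul e (inner e y)) =
      inner y y - star (inner e y) * inner e y := by
  rw [hX.inner_sub_left, hX.inner_smul_left, hX.inner_sub_smul_inner_eq_zero he, mul_zero,
    sub_zero, hX.inner_sub_smul_inner_right, hX.star_inner]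

theorem inner_sub_smul_sub_smul_inner (x y : X) (α β : A) :
    inner (x - smul e α) (y - smul e β - smul e (inner e (y - smul e β))) =
      inner x y - inner x e * inner e y := by
  rw [hX.inner_sub_left, hX.inner_smul_left, hX.inner_sub_smul_inner_eq_zero he, mul_zero,
    sub_zero, hX.inner_sub_smul_inner_right, hX.inner_sub_right, hX.inner_sub_right,
    hX.inner_smul_right, hX.inner_smul_right, mul_sub, ← mul_assoc,
    hX.inner_mul_inner_self_of_isIdempotentElem he]
  abel

end Idempotent

variable [StarOrderedRing A]

theorem star_inner_mul_inner_le (u w : X) :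
    star (inner u w) * inner u w ≤ ‖inner u u‖ • inner w w := by
  rcases eq_or_ne (inner u u) 0 with hu | hu
  · rw [hX.eq_zero_of_inner_self_eq_zero u hu, hX.inner_zero_left, star_zero, zero_mul]
    exact smul_nonneg (norm_nonneg _) (hX.inner_self_nonneg w)
  set n := ‖inner u u‖
  set M := star (inner u w) * inner u w
  have hn : 0 < n := norm_pos_iff.mpr hu
  set t : A := n⁻¹ • inner u w
  have hwt : 0 ≤ inner w w - n⁻¹ • M := calc
    0 ≤ inner (w - smul u t) (w - smul u t) := hX.inner_self_nonneg _
    _ = inner w w - n⁻¹ • M - n⁻¹ • M + star t * inner u u * t := by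
      simp only [hX.inner_sub_left, hX.inner_sub_right, hX.inner_smul_left, hX.inner_smul_right,
        t, M, star_smul, star_trivial, hX.star_inner, mul_smul_comm, smul_mul_assoc, mul_assoc]
      abel
    _ ≤ inner w w - n⁻¹ • M - n⁻¹ • M + n • (star t * t) := by
      gcongr; exact CStarAlgebra.star_left_conjugate_le_norm_smul (hX.star_inner u u)
    _ = inner w w - n⁻¹ • M := by
      simp only [t, M, star_smul, star_trivial, mul_smul_comm, smul_mul_assoc, smul_smul]
      rw [show n * (n⁻¹ * n⁻¹) = n⁻¹ by field_simp]
      abel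
  have := smul_nonneg hn.le hwt
  rwa [smul_sub, smul_smul, mul_inv_cancel₀ hn.ne', one_smul, sub_nonneg] at this

theorem inner_sub_smul_inner_self_le {e : X} (he : IsIdempotentElem (inner e e)) (y : X) :
    inner (y - smul e (inner e y)) (y - smul e (inner e y)) ≤ inner y y := by
  rw [hX.inner_sub_smul_inner_self he]
  exact sub_le_self _ (star_mul_self_nonneg _)

end IsInnerProductModule

/-- `|⟨x,y⟩ − ⟨x,e⟩⟨e,y⟩|² ≤ ‖x − e((a+b)/2)‖² · |y − e((c+d)/2)|²`,
where `|z|² = ⟨z,z⟩` for `z ∈ X`, `|c|² = c*c` for `c ∈ A`, `‖z‖² = ‖⟨z,z⟩‖`. -/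
theorem stmt4 {A X : Type*} [CStarAlgebra A] [PartialOrder A] [StarOrderedRing A]
    [AddCommGroup X]
    (inner : X → X → A) (smul : X → A → X)
    (h_add : ∀ x y z : X, inner x (y + z) = inner x y + inner x z)
    (h_smul : ∀ (x y : X) (a : A), inner x (smul y a) = inner x y * a)
    (h_star : ∀ x y : X, star (inner x y) = inner y x)
    (h_pos : ∀ x : X, 0 ≤ inner x x)
    (h_nondeg : ∀ x : X, inner x x = 0 → x = 0)
    (e : X) (h_idem : inner e e * inner e e = inner e e)
    (x y : X) (a b c d : A) :
    star (inner x y - inner x e * inner e y) * (inner x y - inner x e * inner e y) ≤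
      ‖inner (x - smul e ((2⁻¹ : ℂ) • (a + b))) (x - smul e ((2⁻¹ : ℂ) • (a + b)))‖ •
        inner (y - smul e ((2⁻¹ : ℂ) • (c + d))) (y - smul e ((2⁻¹ : ℂ) • (c + d))) := by
  have hX : IsInnerProductModule inner smul := ⟨h_add, h_smul, h_star, h_pos, h_nondeg⟩
  set u := x - smul e ((2⁻¹ : ℂ) • (a + b))
  set v := y - smul e ((2⁻¹ : ℂ) • (c + d))
  calc _ = star (inner u (v - smul e (inner e v))) * inner u (v - smul e (inner e v)) := by
        rw [hX.inner_sub_smul_sub_smul_inner h_idem]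
    _ ≤ ‖inner u u‖ • inner (v - smul e (inner e v)) (v - smul e (inner e v)) :=
        hX.star_inner_mul_inner_le u _
    _ ≤ ‖inner u u‖ • inner v v :=
        smul_le_smul_of_nonneg_left (hX.inner_sub_smul_inner_self_le h_idem v) (norm_nonneg _)
end

section
/- Let X be an inner product module over a C*-algebra A, e ∈ X with ⟨e,e⟩ idempotent, and x, y ∈ X, a, b, c, d ∈ A. If Re⟨x − ea, eb − x⟩ ≥ 0 and Re⟨y − ec, ed − y⟩ ≥ 0 in A, then |⟨x,y⟩ − ⟨x,e⟩⟨e,y⟩| ≤ (1/4)‖e(a−b)‖ · |e(c−d)|. -/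
/-! Since `⟨e, e⟩` is idempotent, nondegeneracy gives `e⟨e, e⟩ = e`, so `x̃ = x - e⟨e, x⟩` is
orthogonal to every `e t` and `⟨x̃, ỹ⟩ = ⟨x, y⟩ - ⟨x, e⟩⟨e, y⟩`. Writing `x - ea = x̃ + u` and
`eb - x = v - x̃` with `u, v` of the form `e t`, the parallelogram law for `u, v` gives
`⟨e(a - b), e(a - b)⟩ = 4⟨x̃, x̃⟩ + 4 Re⟨x - ea, eb - x⟩ + ⟨u - v, u - v⟩ ≥ 4⟨x̃, x̃⟩`, and likewise
for `y`. The Cauchy–Schwarz inequality `|⟨x̃, ỹ⟩|² ≤ ‖⟨x̃, x̃⟩‖ ⟨ỹ, ỹ⟩` and operator monotonicity of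
the square root conclude. -/

section CStarAlgebra

variable {A : Type*} [CStarAlgebra A] [PartialOrder A] [StarOrderedRing A]

theorem CFC.sqrt_sq_smul {r : ℝ} (hr : 0 ≤ r) {a : A} (ha : 0 ≤ a) :
    CFC.sqrt (r ^ 2 • a) = r • CFC.sqrt a := by
  refine CFC.sqrt_unique ?_ (smul_nonneg hr (CFC.sqrt_nonneg a))
  rw [smul_mul_smul_comm, CFC.sqrt_mul_sqrt_self a ha, sq]

theorem nonneg_of_half_smul_nonneg {a : A} (h : 0 ≤ (2⁻¹ : ℂ) • a) : 0 ≤ a := by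
  rwa [show (2⁻¹ : ℂ) = ((2⁻¹ : ℝ) : ℂ) by push_cast; rfl, Complex.coe_smul,
    smul_nonneg_iff_nonneg_of_pos_left (by norm_num)] at h

end CStarAlgebra

structure IsSemiInnerProduct {A X : Type*} [Mul A] [Add A] [Star A] [Zero A] [LE A] [Add X]
    (inner : X → X → A) (smul : X → A → X) : Prop where
  inner_add_right : ∀ x y z : X, inner x (y + z) = inner x y + inner x z
  inner_smul_right : ∀ (x y : X) (a : A), inner x (smul y a) = inner x y * a
  star_inner : ∀ x y : X, star (inner x y) = inner y x
  inner_self_nonneg : ∀ x : X, 0 ≤ inner x x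

namespace IsSemiInnerProduct

section Ring

variable {A X : Type*} [Ring A] [StarRing A] [PartialOrder A] [AddCommGroup X]
  {inner : X → X → A} {smul : X → A → X}

theorem inner_sub_right (h : IsSemiInnerProduct inner smul) (x y z : X) :
    inner x (y - z) = inner x y - inner x z :=
  map_sub (AddMonoidHom.mk' (inner x) (h.inner_add_right x)) y z

theorem inner_zero_right (h : IsSemiInnerProduct inner smul) (x : X) : inner x 0 = 0 :=
  map_zero (AddMonoidHom.mk' (inner x) (h.inner_add_right x))

theorem inner_add_left (h : IsSemiInnerProduct inner smul) (x y z : X) :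
    inner (x + y) z = inner x z + inner y z := by
  rw [← h.star_inner, h.inner_add_right, star_add, h.star_inner, h.star_inner]

theorem inner_sub_left (h : IsSemiInnerProduct inner smul) (x y z : X) :
    inner (x - y) z = inner x z - inner y z := by
  rw [← h.star_inner, h.inner_sub_right, star_sub, h.star_inner, h.star_inner]

theorem inner_zero_left (h : IsSemiInnerProduct inner smul) (x : X) : inner 0 x = 0 := by
  rw [← h.star_inner, h.inner_zero_right, star_zero]

theorem inner_neg_neg (h : IsSemiInnerProduct inner smul) (x y : X) :
    inner (-x) (-y) = inner x y := by
  rw [← zero_sub x, ← zero_sub y, h.inner_sub_left, h.inner_sub_right, h.inner_sub_right,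
    h.inner_zero_left, h.inner_zero_left, h.inner_zero_right]
  abel

theorem inner_smul_left (h : IsSemiInnerProduct inner smul) (x y : X) (a : A) :
    inner (smul x a) y = star a * inner x y := by
  rw [← h.star_inner, h.inner_smul_right, star_mul, h.star_inner]

theorem smul_inner_self_of_idempotent (h : IsSemiInnerProduct inner smul)
    (h_nondeg : ∀ x : X, inner x x = 0 → x = 0) {e : X}
    (h_idem : inner e e * inner e e = inner e e) : smul e (inner e e) = e := by
  refine sub_eq_zero.mp (h_nondeg _ ?_)
  simp only [h.inner_sub_left, h.inner_sub_right, h.inner_smul_left, h.inner_smul_right,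
    h.star_inner, h_idem, sub_self]

variable {e : X}

theorem inner_sub_smul_inner_smul (h : IsSemiInnerProduct inner smul)
    (he : smul e (inner e e) = e) (x : X) (a : A) :
    inner (x - smul e (inner e x)) (smul e a) = 0 := by
  have hxe : inner x e * inner e e = inner x e := by
    rw [← h.inner_smul_right, he]
  rw [h.inner_smul_right, h.inner_sub_left, h.inner_smul_left, h.star_inner, hxe, sub_self,
    zero_mul]

theorem inner_smul_sub_smul_inner (h : IsSemiInnerProduct inner smul)
    (he : smul e (inner e e) = e) (x : X) (a : A) :
    inner (smul e a) (x - smul e (inner e x)) = 0 := by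
  rw [← h.star_inner, h.inner_sub_smul_inner_smul he, star_zero]

theorem inner_sub_smul_inner_sub_smul_inner (h : IsSemiInnerProduct inner smul)
    (he : smul e (inner e e) = e) (x y : X) :
    inner (x - smul e (inner e x)) (y - smul e (inner e y)) =
      inner x y - inner x e * inner e y := by
  rw [h.inner_sub_right, h.inner_sub_smul_inner_smul he, sub_zero, h.inner_sub_left,
    h.inner_smul_left, h.star_inner]

/-- The parallelogram law for `u = p - w` and `v = q + w`, both orthogonal to `w`. -/
theorem four_mul_inner_self_le [StarOrderedRing A] (h : IsSemiInnerProduct inner smul)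
    {p q w : X} (hp : inner (p - w) w = 0) (hq : inner w (q + w) = 0)
    (hpq : 0 ≤ inner p q + star (inner p q)) :
    4 * inner w w ≤ inner (p + q) (p + q) := by
  have hpw : inner p w = inner w w := by rwa [h.inner_sub_left, sub_eq_zero] at hp
  have hwq : inner w q = -inner w w := by rwa [h.inner_add_right, add_eq_zero_iff_eq_neg] at hq
  have hwp : inner w p = inner w w := by rw [← h.star_inner, hpw, h.star_inner]
  have hqw : inner q w = -inner w w := by rw [← h.star_inner, hwq, star_neg, h.star_inner]
  have key : inner (p + q) (p + q) = 4 * inner w w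
      + ((inner p q + star (inner p q)) + (inner p q + star (inner p q))
        + inner (p - w - (q + w)) (p - w - (q + w))) := by
    simp only [h.inner_add_left, h.inner_add_right, h.inner_sub_left, h.inner_sub_right,
      h.star_inner, hpw, hwq, hwp, hqw]
    rw [show (4 : A) * inner w w = 4 • inner w w by rw [nsmul_eq_mul]; norm_num]
    abel
  rw [key]
  exact le_add_of_nonneg_right (add_nonneg (add_nonneg hpq hpq) (h.inner_self_nonneg _))

end Ring

section CStarAlgebra

variable {A X : Type*} [CStarAlgebra A] [PartialOrder A] [StarOrderedRing A] [AddCommGroup X]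
  {inner : X → X → A} {smul : X → A → X}

theorem star_inner_mul_inner_le (h : IsSemiInnerProduct inner smul)
    (h_nondeg : ∀ x : X, inner x x = 0 → x = 0) (x y : X) :
    star (inner x y) * inner x y ≤ ‖inner x x‖ • inner y y := by
  by_cases hx : inner x x = 0
  · simp [h_nondeg x hx, h.inner_zero_left]
  set t := ‖inner x x‖
  have ht : 0 < t := norm_pos_iff.mpr hx
  set P := star (inner x y) * inner x y
  set c := t⁻¹ • inner x y
  have hconj : star c * inner x x * c ≤ t⁻¹ • P := by
    calc star c * inner x x * c ≤ t • (star c * c) :=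
          CStarAlgebra.star_left_conjugate_le_norm_smul (.of_nonneg (h.inner_self_nonneg x))
      _ = t⁻¹ • P := by
          simp only [c, P, star_smul, star_trivial, smul_mul_assoc, mul_smul_comm, smul_smul]
          congr 1
          field_simp
  have hexp : inner (y - smul x c) (y - smul x c)
      = inner y y - t⁻¹ • P - t⁻¹ • P + star c * inner x x * c := by
    simp only [h.inner_sub_left, h.inner_sub_right, h.inner_smul_left, h.inner_smul_right,
      c, P, star_smul, star_trivial, smul_mul_assoc, mul_smul_comm, h.star_inner, mul_assoc]
    abel
  have hP : t⁻¹ • P ≤ inner y y := by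
    rw [← sub_nonneg]
    calc 0 ≤ inner (y - smul x c) (y - smul x c) := h.inner_self_nonneg _
      _ ≤ inner y y - t⁻¹ • P - t⁻¹ • P + t⁻¹ • P := by rw [hexp]; gcongr
      _ = inner y y - t⁻¹ • P := sub_add_cancel _ _
  simpa [smul_smul, ht.ne'] using smul_le_smul_of_nonneg_left hP ht.le

theorem inner_sub_smul_inner_self_le (h : IsSemiInnerProduct inner smul)
    (h_smul_add : ∀ (x : X) (a b : A), smul x (a + b) = smul x a + smul x b) {e : X}
    (he : smul e (inner e e) = e) {z : X} {a b : A}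
    (hz : 0 ≤ inner (z - smul e a) (smul e b - z) + star (inner (z - smul e a) (smul e b - z))) :
    inner (z - smul e (inner e z)) (z - smul e (inner e z)) ≤
      (4⁻¹ : ℝ) • inner (smul e (a - b)) (smul e (a - b)) := by
  set w := z - smul e (inner e z) with hw
  have hp : inner (z - smul e a - w) w = 0 := by
    rw [show z - smul e a - w = smul e (inner e z) - smul e a by rw [hw]; abel,
      h.inner_sub_left, h.inner_smul_sub_smul_inner he, h.inner_smul_sub_smul_inner he, sub_zero]
  have hq : inner w (smul e b - z + w) = 0 := by
    rw [show smul e b - z + w = smul e b - smul e (inner e z) by rw [hw]; abel,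
      h.inner_sub_right, h.inner_sub_smul_inner_smul he, h.inner_sub_smul_inner_smul he, sub_zero]
  have hpq : z - smul e a + (smul e b - z) = -smul e (a - b) := by
    rw [show smul e (a - b) = smul e a - smul e b from
      map_sub (AddMonoidHom.mk' (smul e) (h_smul_add e)) a b]
    abel
  rw [le_inv_smul_iff_of_pos (by norm_num), ofNat_smul_eq_nsmul ℝ, nsmul_eq_mul, Nat.cast_ofNat,
    ← h.inner_neg_neg (smul e _), ← hpq]
  exact h.four_mul_inner_self_le hp hq hz

end CStarAlgebra

end IsSemiInnerProduct

/-- If `Re⟨x − ea, eb − x⟩ ≥ 0` and `Re⟨y − ec, ed − y⟩ ≥ 0`, then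
`|⟨x,y⟩ − ⟨x,e⟩⟨e,y⟩| ≤ (1/4)‖e(a−b)‖ · |e(c−d)|`, where `|t| = (t*t)^{1/2}` in `A`
and `‖z‖ = ‖⟨z,z⟩‖^{1/2}` for `z ∈ X`. -/
theorem stmt6 {A X : Type*} [CStarAlgebra A] [PartialOrder A] [StarOrderedRing A]
    [AddCommGroup X]
    (inner : X → X → A) (smul : X → A → X)
    (h_add : ∀ x y z : X, inner x (y + z) = inner x y + inner x z)
    (h_smul : ∀ (x y : X) (a : A), inner x (smul y a) = inner x y * a)
    (h_smul_add : ∀ (x : X) (a b : A), smul x (a + b) = smul x a + smul x b)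
    (h_star : ∀ x y : X, star (inner x y) = inner y x)
    (h_pos : ∀ x : X, 0 ≤ inner x x)
    (h_nondeg : ∀ x : X, inner x x = 0 → x = 0)
    (e : X) (h_idem : inner e e * inner e e = inner e e)
    (x y : X) (a b c d : A)
    (hx : 0 ≤ (2⁻¹ : ℂ) • (inner (x - smul e a) (smul e b - x) +
      star (inner (x - smul e a) (smul e b - x))))
    (hy : 0 ≤ (2⁻¹ : ℂ) • (inner (y - smul e c) (smul e d - y) +
      star (inner (y - smul e c) (smul e d - y)))) :
    CFC.sqrt (star (inner x y - inner x e * inner e y) *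
        (inner x y - inner x e * inner e y)) ≤
      ((4⁻¹ : ℝ) * Real.sqrt ‖inner (smul e (a - b)) (smul e (a - b))‖) •
        CFC.sqrt (inner (smul e (c - d)) (smul e (c - d))) := by
  have hI : IsSemiInnerProduct inner smul := ⟨h_add, h_smul, h_star, h_pos⟩
  have he := hI.smul_inner_self_of_idempotent h_nondeg h_idem
  have hx4 := hI.inner_sub_smul_inner_self_le h_smul_add he (nonneg_of_half_smul_nonneg hx)
  have hy4 := hI.inner_sub_smul_inner_self_le h_smul_add he (nonneg_of_half_smul_nonneg hy)
  set xt := x - smul e (inner e x)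
  set yt := y - smul e (inner e y)
  set Qab := inner (smul e (a - b)) (smul e (a - b))
  set Qcd := inner (smul e (c - d)) (smul e (c - d))
  have hnorm : ‖inner xt xt‖ ≤ 4⁻¹ * ‖Qab‖ := by
    simpa [norm_smul] using CStarAlgebra.norm_le_norm_of_nonneg_of_le (h_pos xt) hx4
  rw [← hI.inner_sub_smul_inner_sub_smul_inner he, ← CFC.sqrt_sq_smul (by positivity) (h_pos _)]
  refine CFC.sqrt_le_sqrt _ _ ?_
  calc star (inner xt yt) * inner xt yt ≤ ‖inner xt xt‖ • inner yt yt :=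
        hI.star_inner_mul_inner_le h_nondeg xt yt
    _ ≤ (4⁻¹ * ‖Qab‖) • ((4⁻¹ : ℝ) • Qcd) :=
        smul_le_smul hnorm hy4 (norm_nonneg _) (smul_nonneg (by norm_num) (h_pos _))
    _ = ((4⁻¹ : ℝ) * √‖Qab‖) ^ 2 • Qcd := by
        rw [smul_smul, mul_pow, Real.sq_sqrt (norm_nonneg _)]
        ring_nf
end

section
/- Let H be an inner product space over ℂ, xᵢ, yᵢ ∈ H, pᵢ ≥ 0 with Σᵢ pᵢ = 1, and x, X, y, Y ∈ H such that Re⟨X − xᵢ, xᵢ − x⟩ ≥ 0 and Re⟨Y − yᵢ, yᵢ − y⟩ ≥ 0 for all i. Then |Σᵢ pᵢ⟨xᵢ,yᵢ⟩ − ⟨Σᵢ pᵢxᵢ, Σᵢ pᵢyᵢ⟩| ≤ (1/4)‖X − x‖‖Y − y‖. -/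
/-!
With `x̄ = ∑ pᵢ xᵢ` and `ȳ = ∑ pᵢ yᵢ`, the left side is the covariance
`∑ pᵢ ⟨xᵢ - x̄, yᵢ - ȳ⟩`, so by Cauchy–Schwarz its square is at most the product of the
variances. By the König–Huygens formula the variance `∑ pᵢ ‖xᵢ - x̄‖²` equals
`Re⟨X - x̄, x̄ - x⟩ - ∑ pᵢ Re⟨X - xᵢ, xᵢ - x⟩`, and the hypothesis together with
`Re⟨u, v⟩ ≤ ‖u + v‖² / 4` bounds it by `‖X - x‖² / 4`.
-/

open Finset RCLike
open scoped InnerProductSpace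

theorem re_inner_le_norm_add_sq_div_four {𝕜 E : Type*} [RCLike 𝕜] [NormedAddCommGroup E]
    [InnerProductSpace 𝕜 E] (a b : E) : re ⟪a, b⟫_𝕜 ≤ ‖a + b‖ ^ 2 / 4 := by
  rw [re_inner_eq_norm_add_mul_self_sub_norm_sub_mul_self_div_four]
  nlinarith [mul_self_nonneg ‖a - b‖]

section WeightedMean

variable (𝕜 : Type*) {E ι : Type*} [RCLike 𝕜] [NormedAddCommGroup E] [InnerProductSpace 𝕜 E]
  [Fintype ι]

def weightedMean (p : ι → ℝ) (x : ι → E) : E := ∑ i, (p i : 𝕜) • x i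

variable {𝕜} {p : ι → ℝ}

theorem sum_ofReal_smul_sub_weightedMean (hp1 : ∑ i, p i = 1) (x : ι → E) :
    ∑ i, (p i : 𝕜) • (x i - weightedMean 𝕜 p x) = 0 := by
  have hp1' : ∑ i, (p i : 𝕜) = 1 := by rw [← ofReal_sum, hp1, ofReal_one]
  simp only [weightedMean, smul_sub, sum_sub_distrib, ← sum_smul, hp1', one_smul, sub_self]

theorem sum_ofReal_mul_inner_sub_sub (hp1 : ∑ i, p i = 1) (x y : ι → E) (a b : E) :
    ∑ i, (p i : 𝕜) * ⟪x i - a, y i - b⟫_𝕜 =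
      ∑ i, (p i : 𝕜) * ⟪x i - weightedMean 𝕜 p x, y i - weightedMean 𝕜 p y⟫_𝕜 +
        ⟪weightedMean 𝕜 p x - a, weightedMean 𝕜 p y - b⟫_𝕜 := by
  set mx := weightedMean 𝕜 p x
  set my := weightedMean 𝕜 p y
  have hp1' : ∑ i, (p i : 𝕜) = 1 := by rw [← ofReal_sum, hp1, ofReal_one]
  calc ∑ i, (p i : 𝕜) * ⟪x i - a, y i - b⟫_𝕜
      = ∑ i, ((p i : 𝕜) * ⟪x i - mx, y i - my⟫_𝕜 + (p i : 𝕜) * ⟪x i - mx, my - b⟫_𝕜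
          + (p i : 𝕜) * ⟪mx - a, y i - my⟫_𝕜 + (p i : 𝕜) * ⟪mx - a, my - b⟫_𝕜) := by
        refine sum_congr rfl fun i _ => ?_
        rw [← sub_add_sub_cancel (x i) mx a, ← sub_add_sub_cancel (y i) my b]
        simp only [inner_add_left, inner_add_right]
        ring
    _ = ∑ i, (p i : 𝕜) * ⟪x i - mx, y i - my⟫_𝕜
          + ⟪∑ i, (p i : 𝕜) • (x i - mx), my - b⟫_𝕜 + ⟪mx - a, ∑ i, (p i : 𝕜) • (y i - my)⟫_𝕜
          + (∑ i, (p i : 𝕜)) * ⟪mx - a, my - b⟫_𝕜 := by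
        simp only [sum_add_distrib, sum_inner, inner_sum, inner_smul_left, inner_smul_right,
          conj_ofReal, sum_mul]
    _ = _ := by
        rw [sum_ofReal_smul_sub_weightedMean hp1, sum_ofReal_smul_sub_weightedMean hp1,
          inner_zero_left, inner_zero_right, hp1']
        ring

theorem sum_mul_norm_sub_weightedMean_sq_le (hp : ∀ i, 0 ≤ p i) (hp1 : ∑ i, p i = 1)
    (x : ι → E) (a b : E) (hx : ∀ i, 0 ≤ re ⟪b - x i, x i - a⟫_𝕜) :
    ∑ i, p i * ‖x i - weightedMean 𝕜 p x‖ ^ 2 ≤ ‖b - a‖ ^ 2 / 4 := by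
  have huygens := congrArg re (sum_ofReal_mul_inner_sub_sub (𝕜 := 𝕜) hp1 x x b a)
  simp only [map_add, map_sum, re_ofReal_mul, inner_self_eq_norm_sq] at huygens
  have hsum : ∑ i, p i * re ⟪x i - b, x i - a⟫_𝕜 ≤ 0 := by
    refine sum_nonpos fun i _ => mul_nonpos_of_nonneg_of_nonpos (hp i) ?_
    rw [← neg_sub b, inner_neg_left, map_neg]
    exact neg_nonpos.mpr (hx i)
  have hmean : -re ⟪weightedMean 𝕜 p x - b, weightedMean 𝕜 p x - a⟫_𝕜 ≤ ‖b - a‖ ^ 2 / 4 := by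
    rw [← map_neg, ← inner_neg_left, neg_sub]
    simpa using
      re_inner_le_norm_add_sq_div_four (b - weightedMean 𝕜 p x) (weightedMean 𝕜 p x - a)
  linarith

theorem norm_sum_ofReal_mul_inner_sq_le (hp : ∀ i, 0 ≤ p i) (u v : ι → E) :
    ‖∑ i, (p i : 𝕜) * ⟪u i, v i⟫_𝕜‖ ^ 2 ≤ (∑ i, p i * ‖u i‖ ^ 2) * ∑ i, p i * ‖v i‖ ^ 2 := by
  have hterm : ∀ i, ‖(p i : 𝕜) * ⟪u i, v i⟫_𝕜‖ ≤ p i * (‖u i‖ * ‖v i‖) := fun i => by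
    rw [norm_mul, norm_ofReal, abs_of_nonneg (hp i)]
    exact mul_le_mul_of_nonneg_left (norm_inner_le_norm _ _) (hp i)
  calc ‖∑ i, (p i : 𝕜) * ⟪u i, v i⟫_𝕜‖ ^ 2 ≤ (∑ i, p i * (‖u i‖ * ‖v i‖)) ^ 2 := by
        gcongr
        exact (norm_sum_le _ _).trans (sum_le_sum fun i _ => hterm i)
    _ ≤ _ := sum_sq_le_sum_mul_sum_of_sq_le_mul _ (fun i _ => mul_nonneg (hp i) (sq_nonneg _))
        (fun i _ => mul_nonneg (hp i) (sq_nonneg _)) (fun i _ => le_of_eq (by ring))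

theorem norm_sum_ofReal_mul_inner_sub_inner_weightedMean_le (hp : ∀ i, 0 ≤ p i)
    (hp1 : ∑ i, p i = 1) (x y : ι → E) (a b c d : E)
    (hx : ∀ i, 0 ≤ re ⟪b - x i, x i - a⟫_𝕜) (hy : ∀ i, 0 ≤ re ⟪d - y i, y i - c⟫_𝕜) :
    ‖∑ i, (p i : 𝕜) * ⟪x i, y i⟫_𝕜 - ⟪weightedMean 𝕜 p x, weightedMean 𝕜 p y⟫_𝕜‖ ≤
      1 / 4 * ‖b - a‖ * ‖d - c‖ := by
  have hcov := sum_ofReal_mul_inner_sub_sub (𝕜 := 𝕜) hp1 x y 0 0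
  simp only [sub_zero] at hcov
  rw [hcov, add_sub_cancel_right]
  refine (pow_le_pow_iff_left₀ (norm_nonneg _) (by positivity) two_ne_zero).mp ?_
  calc _ ≤ _ := norm_sum_ofReal_mul_inner_sq_le hp _ _
    _ ≤ ‖b - a‖ ^ 2 / 4 * (‖d - c‖ ^ 2 / 4) :=
        mul_le_mul (sum_mul_norm_sub_weightedMean_sq_le hp hp1 x a b hx)
          (sum_mul_norm_sub_weightedMean_sq_le hp hp1 y c d hy)
          (sum_nonneg fun i _ => mul_nonneg (hp i) (sq_nonneg _)) (by positivity)
    _ = _ := by ring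

end WeightedMean

/-- Grüss inequality in a complex inner product space:
if `Re⟨X − xᵢ, xᵢ − x⟩ ≥ 0` and `Re⟨Y − yᵢ, yᵢ − y⟩ ≥ 0` for all `i`, then
`|Σᵢ pᵢ⟨xᵢ,yᵢ⟩ − ⟨Σᵢ pᵢxᵢ, Σᵢ pᵢyᵢ⟩| ≤ (1/4)‖X − x‖‖Y − y‖`. -/
theorem stmt13 {H : Type*} [NormedAddCommGroup H] [InnerProductSpace ℂ H]
    (n : ℕ) (xv yv : Fin n → H) (p : Fin n → ℝ)
    (hp : ∀ i, 0 ≤ p i) (hp1 : ∑ i, p i = 1)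
    (x X y Y : H)
    (hx : ∀ i, 0 ≤ (inner ℂ (X - xv i) (xv i - x) : ℂ).re)
    (hy : ∀ i, 0 ≤ (inner ℂ (Y - yv i) (yv i - y) : ℂ).re) :
    ‖∑ i, (p i : ℂ) * (inner ℂ (xv i) (yv i) : ℂ) -
        (inner ℂ (∑ i, (p i : ℂ) • xv i) (∑ i, (p i : ℂ) • yv i) : ℂ)‖ ≤
      (1 / 4) * ‖X - x‖ * ‖Y - y‖ :=
  norm_sum_ofReal_mul_inner_sub_inner_weightedMean_le hp hp1 xv yv x X y Y hx hy
end

section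
/- Let X be a semi-inner product module over a C*-algebra, a ∈ X, α₁,…,αₙ ∈ ℂ, p a probability vector, x₁,…,xₙ ∈ X, and r ≥ 0 with ‖xᵢ − a‖ ≤ r for all i. Then ‖Σᵢ pᵢαᵢxᵢ − (Σᵢ pᵢαᵢ)(Σᵢ pᵢxᵢ)‖ ≤ r Σᵢ pᵢ|αᵢ − Σⱼ pⱼαⱼ| ≤ r [Σᵢ pᵢ|αᵢ|² − |Σᵢ pᵢαᵢ|²]^{1/2}. -/
/-!
Since `∑ pᵢ = 1`, the vector `∑ pᵢαᵢxᵢ − (∑ pᵢαᵢ)(∑ pᵢxᵢ)` equals `∑ pᵢ(αᵢ − β)(xᵢ − a)` with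
`β = ∑ pⱼαⱼ`, so the first inequality is the triangle inequality and homogeneity of
`z ↦ ‖⟨z, z⟩‖^{1/2}`. The triangle inequality comes from positivity of
`⟨σu − σ⁻¹v, σu − σ⁻¹v⟩`, which gives `⟨u+v, u+v⟩ ≤ (1 + σ²)⟨u, u⟩ + (1 + σ⁻²)⟨v, v⟩` in the
C*-algebra, followed by optimising over `σ`. The second inequality is Jensen's inequality
`(∑ pᵢtᵢ)² ≤ ∑ pᵢtᵢ²` combined with the variance identity `∑ pᵢ|αᵢ − β|² = ∑ pᵢ|αᵢ|² − |β|²`.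
-/

open Finset

theorem le_add_sq_of_forall_pos {a b c : ℝ} (ha : 0 ≤ a) (hb : 0 ≤ b)
    (h : ∀ s : ℝ, 0 < s → c ≤ (1 + s) * a ^ 2 + (1 + s⁻¹) * b ^ 2) : c ≤ (a + b) ^ 2 := by
  refine le_of_forall_pos_le_add fun ε hε => ?_
  set δ := ε / (a + b + 1)
  have hδ : 0 < δ := by positivity
  -- `s = (b + δ) / (a + δ)` perturbs the optimal `s = b / a`, which is undefined when `a = 0`.
  have hc := h ((b + δ) / (a + δ)) (by positivity)
  have ha' : (b + δ) / (a + δ) * a ^ 2 ≤ (b + δ) * a := by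
    rw [div_mul_eq_mul_div, div_le_iff₀ (by positivity)]
    nlinarith [mul_nonneg (mul_nonneg (add_nonneg hb hδ.le) ha) hδ.le]
  have hb' : (a + δ) / (b + δ) * b ^ 2 ≤ (a + δ) * b := by
    rw [div_mul_eq_mul_div, div_le_iff₀ (by positivity)]
    nlinarith [mul_nonneg (mul_nonneg (add_nonneg ha hδ.le) hb) hδ.le]
  have hε' : δ * (a + b) ≤ ε := by
    rw [div_mul_eq_mul_div, div_le_iff₀ (by positivity)]; nlinarith
  rw [inv_div] at hc
  nlinarith

theorem sum_mul_le_sqrt_sum_mul_sq {ι : Type*} (s : Finset ι) {p f : ι → ℝ}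
    (hp : ∀ i ∈ s, 0 ≤ p i) (hp1 : ∑ i ∈ s, p i = 1) :
    ∑ i ∈ s, p i * f i ≤ √(∑ i ∈ s, p i * f i ^ 2) :=
  Real.le_sqrt_of_sq_le <| (Even.convexOn_pow even_two).map_sum_le hp hp1 fun _ _ => Set.mem_univ _

theorem sum_mul_norm_sub_sum_smul_sq {ι E : Type*} [SeminormedAddCommGroup E]
    [InnerProductSpace ℝ E] (s : Finset ι) (p : ι → ℝ) (v : ι → E) (hp1 : ∑ i ∈ s, p i = 1) :
    ∑ i ∈ s, p i * ‖v i - ∑ j ∈ s, p j • v j‖ ^ 2 =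
      ∑ i ∈ s, p i * ‖v i‖ ^ 2 - ‖∑ j ∈ s, p j • v j‖ ^ 2 := by
  set m := ∑ j ∈ s, p j • v j
  have hm : ∑ i ∈ s, p i * inner ℝ (v i) m = ‖m‖ ^ 2 := by
    simp only [← real_inner_smul_left, ← sum_inner, real_inner_self_eq_norm_sq, m]
  simp only [norm_sub_sq_real, mul_add, mul_sub, sum_add_distrib, sum_sub_distrib]
  rw [← sum_mul, hp1]
  simp only [mul_left_comm _ (2 : ℝ), ← mul_sum, hm]
  ring

theorem sum_smul_sub_sum_smul_sum {ι R M : Type*} [CommRing R] [AddCommGroup M] [Module R M]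
    (s : Finset ι) (p c : ι → R) (x : ι → M) (a : M) (hp1 : ∑ i ∈ s, p i = 1) :
    ∑ i ∈ s, (p i * c i) • x i - (∑ i ∈ s, p i * c i) • ∑ i ∈ s, p i • x i =
      ∑ i ∈ s, (p i * (c i - ∑ j ∈ s, p j * c j)) • (x i - a) := by
  set β := ∑ j ∈ s, p j * c j
  have hβa : ∑ i ∈ s, (p i * β) • a = β • a := by rw [← sum_smul, ← sum_mul, hp1, one_mul]
  simp only [mul_sub, sub_smul, smul_sub, sum_sub_distrib, smul_sum, smul_smul, hβa, mul_comm β]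
  rw [← sum_smul]
  abel

section SemiInnerProduct

variable {A X : Type*} [CStarAlgebra A] [AddCommGroup X] [Module ℂ X] (inner : X → X → A)

noncomputable def sipNorm (z : X) : ℝ := √‖inner z z‖

variable (h_add : ∀ x y z : X, inner x (y + z) = inner x y + inner x z)
  (h_smul_c : ∀ (c : ℂ) (x y : X), inner x (c • y) = c • inner x y)
  (h_star : ∀ x y : X, star (inner x y) = inner y x)

include h_smul_c h_star in
theorem sip_smul_left (c : ℂ) (x y : X) : inner (c • x) y = star c • inner x y := by
  rw [← h_star, h_smul_c, star_smul, h_star]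

include h_smul_c in
theorem sipNorm_zero : sipNorm inner 0 = 0 := by
  have h0 : inner (0 : X) 0 = 0 := by simpa using h_smul_c 0 0 0
  rw [sipNorm, h0, norm_zero, Real.sqrt_zero]

include h_smul_c h_star in
theorem sipNorm_smul (c : ℂ) (z : X) : sipNorm inner (c • z) = ‖c‖ * sipNorm inner z := by
  have h : inner (c • z) (c • z) = (c * star c) • inner z z := by
    rw [h_smul_c, sip_smul_left inner h_smul_c h_star, smul_smul]
  rw [sipNorm, sipNorm, h, norm_smul, norm_mul, norm_star,
    Real.sqrt_mul (by positivity), Real.sqrt_mul_self (norm_nonneg c)]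

include h_add h_smul_c h_star in
theorem sip_add_self_add_sip_sub_self (u v : X) {σ : ℝ} (hσ : σ ≠ 0) :
    inner (u + v) (u + v) + inner ((σ : ℂ) • u - (σ⁻¹ : ℂ) • v) ((σ : ℂ) • u - (σ⁻¹ : ℂ) • v) =
      ((1 + σ ^ 2 : ℝ) : ℂ) • inner u u + ((1 + σ⁻¹ ^ 2 : ℝ) : ℂ) • inner v v := by
  have h_add_left (x y z : X) : inner (x + y) z = inner x z + inner y z := by
    rw [← h_star, h_add, star_add, h_star, h_star]
  have hσ' : (σ : ℂ) ≠ 0 := by exact_mod_cast hσ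
  simp only [sub_eq_add_neg, ← neg_smul, h_add, h_add_left, h_smul_c,
    sip_smul_left inner h_smul_c h_star, smul_smul, star_neg, Complex.star_def,
    Complex.conj_ofReal, map_inv₀]
  push_cast
  match_scalars <;> field_simp <;> ring

variable [PartialOrder A] [StarOrderedRing A] (h_pos : ∀ x : X, 0 ≤ inner x x)

include h_add h_smul_c h_star h_pos in
theorem sipNorm_add_le (u v : X) : sipNorm inner (u + v) ≤ sipNorm inner u + sipNorm inner v := by
  have hu := norm_nonneg (inner u u)
  have hv := norm_nonneg (inner v v)
  rw [sipNorm, sipNorm, sipNorm, Real.sqrt_le_left (by positivity)]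
  refine le_add_sq_of_forall_pos (Real.sqrt_nonneg _) (Real.sqrt_nonneg _) fun s hs => ?_
  have hσ : 0 < √s := Real.sqrt_pos.2 hs
  have hle : inner (u + v) (u + v) ≤
      ((1 + √s ^ 2 : ℝ) : ℂ) • inner u u + ((1 + (√s)⁻¹ ^ 2 : ℝ) : ℂ) • inner v v := by
    rw [← sip_add_self_add_sip_sub_self inner h_add h_smul_c h_star u v hσ.ne']
    exact le_add_of_nonneg_right (h_pos _)
  rw [inv_pow, Real.sq_sqrt hs.le] at hle
  rw [Real.sq_sqrt hu, Real.sq_sqrt hv]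
  calc ‖inner (u + v) (u + v)‖
      ≤ ‖((1 + s : ℝ) : ℂ) • inner u u‖ + ‖((1 + s⁻¹ : ℝ) : ℂ) • inner v v‖ :=
        (CStarAlgebra.norm_le_norm_of_nonneg_of_le (h_pos _) hle).trans (norm_add_le _ _)
    _ = (1 + s) * ‖inner u u‖ + (1 + s⁻¹) * ‖inner v v‖ := by
        rw [norm_smul, norm_smul, Complex.norm_real, Complex.norm_real,
          Real.norm_of_nonneg (by positivity), Real.norm_of_nonneg (by positivity)]

include h_add h_smul_c h_star h_pos in
theorem sipNorm_sum_le {ι : Type*} (s : Finset ι) (f : ι → X) :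
    sipNorm inner (∑ i ∈ s, f i) ≤ ∑ i ∈ s, sipNorm inner (f i) :=
  le_sum_of_subadditive _ (sipNorm_zero inner h_smul_c).le
    (sipNorm_add_le inner h_add h_smul_c h_star h_pos) s f

end SemiInnerProduct

/-- If `‖xᵢ − a‖ ≤ r` for all `i`, then
`‖Σᵢ pᵢαᵢxᵢ − (Σᵢ pᵢαᵢ)(Σᵢ pᵢxᵢ)‖ ≤ r Σᵢ pᵢ|αᵢ − Σⱼ pⱼαⱼ|
  ≤ r [Σᵢ pᵢ|αᵢ|² − |Σᵢ pᵢαᵢ|²]^{1/2}`, where `‖z‖ = ‖⟨z,z⟩‖^{1/2}` for `z ∈ X`. -/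
theorem stmt15 {A X : Type*} [CStarAlgebra A] [PartialOrder A] [StarOrderedRing A]
    [AddCommGroup X] [Module ℂ X]
    (inner : X → X → A)
    (h_add : ∀ x y z : X, inner x (y + z) = inner x y + inner x z)
    (h_smul_c : ∀ (c : ℂ) (x y : X), inner x (c • y) = c • inner x y)
    (h_star : ∀ x y : X, star (inner x y) = inner y x)
    (h_pos : ∀ x : X, 0 ≤ inner x x)
    (n : ℕ) (x : Fin n → X) (a : X) (α : Fin n → ℂ) (p : Fin n → ℝ)
    (hp : ∀ i, 0 ≤ p i) (hp1 : ∑ i, p i = 1)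
    (r : ℝ) (hr : 0 ≤ r)
    (hx : ∀ i, Real.sqrt ‖inner (x i - a) (x i - a)‖ ≤ r) :
    Real.sqrt ‖inner
        (∑ i, ((p i : ℂ) * α i) • x i -
          (∑ i, (p i : ℂ) * α i) • ∑ i, (p i : ℂ) • x i)
        (∑ i, ((p i : ℂ) * α i) • x i -
          (∑ i, (p i : ℂ) * α i) • ∑ i, (p i : ℂ) • x i)‖ ≤
      r * ∑ i, p i * ‖α i - ∑ j, (p j : ℂ) * α j‖ ∧
    r * ∑ i, p i * ‖α i - ∑ j, (p j : ℂ) * α j‖ ≤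
      r * Real.sqrt (∑ i, p i * ‖α i‖ ^ 2 - ‖∑ i, (p i : ℂ) * α i‖ ^ 2) := by
  have hpC : ∑ i, (p i : ℂ) = 1 := by exact_mod_cast hp1
  have hβ : ∑ j, (p j : ℂ) * α j = ∑ j, p j • α j := by simp only [Complex.real_smul]
  have hdev := sum_smul_sub_sum_smul_sum univ (fun i => (p i : ℂ)) α x a hpC
  constructor
  · change sipNorm inner _ ≤ _
    rw [hdev]
    calc sipNorm inner (∑ i, ((p i : ℂ) * (α i - ∑ j, (p j : ℂ) * α j)) • (x i - a))
        ≤ ∑ i, p i * ‖α i - ∑ j, (p j : ℂ) * α j‖ * sipNorm inner (x i - a) := by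
          refine (sipNorm_sum_le inner h_add h_smul_c h_star h_pos _ _).trans_eq ?_
          simp only [sipNorm_smul inner h_smul_c h_star, norm_mul, Complex.norm_real,
            Real.norm_of_nonneg (hp _)]
      _ ≤ ∑ i, p i * ‖α i - ∑ j, (p j : ℂ) * α j‖ * r := by
          gcongr with i
          exacts [mul_nonneg (hp i) (norm_nonneg _), hx i]
      _ = r * ∑ i, p i * ‖α i - ∑ j, (p j : ℂ) * α j‖ := by rw [mul_sum]; simp only [mul_comm r]
  · gcongr
    rw [hβ, ← sum_mul_norm_sub_sum_smul_sq univ p α hp1]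
    exact sum_mul_le_sqrt_sum_mul_sq univ (fun i _ => hp i) hp1
end

section
/- Let A be a C*-algebra, p a probability vector, a, b, a₁,…,aₙ, b₁,…,bₙ ∈ A, and r, s ≥ 0 such that ‖aᵢ − a‖ ≤ r and ‖bᵢ − b‖ ≤ s for all i. Then ‖Σᵢ pᵢaᵢbᵢ − (Σᵢ pᵢaᵢ)(Σᵢ pᵢbᵢ)‖ ≤ rs. -/
/-! Writing `m = Σ pᵢ bᵢ`, the left-hand side equals `Σ pᵢ (aᵢ - a)(bᵢ - m)`. In the Hilbert
`A`-module `Aⁿ`, Cauchy–Schwarz bounds its squared norm by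
`‖Σ pᵢ (aᵢ - a)(aᵢ - a)*‖ · ‖Σ pᵢ (bᵢ - m)*(bᵢ - m)‖`. The first factor is at most `r²`; the
second is at most `‖Σ pᵢ (bᵢ - b)*(bᵢ - b)‖ ≤ s²`, because in the order of `A` the weighted
second moment about `b` exceeds the one about the mean `m` by `(m - b)*(m - b) ≥ 0`. -/

open scoped InnerProductSpace
open Finset WithCStarModule

section Weighted

variable {ι R : Type*} [Fintype ι]

theorem sum_smul_sub_sum_smul {𝕜 : Type*} [Semiring 𝕜] [AddCommGroup R] [Module 𝕜 R]
    (p : ι → 𝕜) (hp : ∑ i, p i = 1) (y : ι → R) :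
    ∑ i, p i • (y i - ∑ j, p j • y j) = 0 := by
  simp only [smul_sub, sum_sub_distrib, ← sum_smul, hp, one_smul, sub_self]

theorem sum_smul_mul_const {𝕜 : Type*} [CommSemiring 𝕜] [Semiring R] [Algebra 𝕜 R]
    (p : ι → 𝕜) (u : ι → R) (c : R) :
    ∑ i, p i • (u i * c) = (∑ i, p i • u i) * c := by
  simp only [sum_mul, smul_mul_assoc]

theorem sum_smul_const_mul {𝕜 : Type*} [CommSemiring 𝕜] [Semiring R] [Algebra 𝕜 R]
    (p : ι → 𝕜) (u : ι → R) (c : R) :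
    ∑ i, p i • (c * u i) = c * ∑ i, p i • u i := by
  simp only [mul_sum, mul_smul_comm]

theorem sum_smul_mul_sub_mul_sum_smul {𝕜 : Type*} [CommRing 𝕜] [Ring R] [Algebra 𝕜 R]
    (p : ι → 𝕜) (hp : ∑ i, p i = 1) (a : R) (x y : ι → R) :
    ∑ i, p i • (x i * y i) - (∑ i, p i • x i) * (∑ i, p i • y i)
      = ∑ i, p i • ((x i - a) * (y i - ∑ j, p j • y j)) := by
  set m := ∑ j, p j • y j
  calc _ = ∑ i, p i • (x i * (y i - m)) := by
        simp only [← sum_smul_mul_const, mul_sub, smul_sub, sum_sub_distrib]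
    _ = ∑ i, p i • (x i * (y i - m)) - a * ∑ i, p i • (y i - m) := by
        rw [sum_smul_sub_sum_smul p hp y, mul_zero, sub_zero]
    _ = _ := by
        rw [← sum_smul_const_mul, ← sum_sub_distrib]
        simp only [sub_mul, smul_sub]

theorem sum_smul_star_sub_mul_sub [Ring R] [StarRing R] [Algebra ℝ R] [StarModule ℝ R]
    (p : ι → ℝ) (hp : ∑ i, p i = 1) (c : R) (y : ι → R) :
    ∑ i, p i • (star (y i - c) * (y i - c))
      = ∑ i, p i • (star (y i - ∑ j, p j • y j) * (y i - ∑ j, p j • y j))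
        + star (∑ j, p j • y j - c) * (∑ j, p j • y j - c) := by
  set m := ∑ j, p j • y j
  have hcentered : ∑ i, p i • (y i - m) = 0 := sum_smul_sub_sum_smul p hp y
  have hstar : ∑ i, p i • star (y i - m) = 0 := by
    simpa only [star_sum, star_smul, star_trivial, star_zero] using congrArg star hcentered
  have hsplit (i : ι) : y i - c = (y i - m) + (m - c) := by abel
  simp only [hsplit, star_add, add_mul, mul_add, smul_add, sum_add_distrib]
  rw [sum_smul_mul_const, sum_smul_const_mul, hcentered, hstar, ← sum_smul, hp, one_smul,
    zero_mul, mul_zero, add_zero, zero_add]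

theorem sum_smul_star_sub_sum_mul_le [Ring R] [StarRing R] [Algebra ℝ R] [StarModule ℝ R]
    [PartialOrder R] [StarOrderedRing R] (p : ι → ℝ) (hp : ∑ i, p i = 1) (c : R) (y : ι → R) :
    ∑ i, p i • (star (y i - ∑ j, p j • y j) * (y i - ∑ j, p j • y j))
      ≤ ∑ i, p i • (star (y i - c) * (y i - c)) := by
  rw [sum_smul_star_sub_mul_sub p hp c y]
  exact le_add_of_nonneg_right (star_mul_self_nonneg _)

theorem norm_sum_smul_le_of_norm_le [SeminormedAddCommGroup R] [NormedSpace ℝ R]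
    (p : ι → ℝ) (hp : ∀ i, 0 ≤ p i) (hp1 : ∑ i, p i = 1) (x : ι → R) {C : ℝ}
    (hx : ∀ i, ‖x i‖ ≤ C) : ‖∑ i, p i • x i‖ ≤ C := by
  simpa using (convex_closedBall (0 : R) C).sum_mem (fun i _ => hp i) hp1
    (fun i _ => mem_closedBall_zero_iff.2 (hx i))

end Weighted

section CauchySchwarz

variable {ι A : Type*} [Fintype ι] [CStarAlgebra A]

theorem CStarAlgebra.norm_sum_mul_sq_le (x y : ι → A) :
    ‖∑ i, x i * y i‖ ^ 2 ≤ ‖∑ i, x i * star (x i)‖ * ‖∑ i, star (y i) * y i‖ := by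
  let _ := CStarAlgebra.spectralOrder A
  have _ := CStarAlgebra.spectralOrderedRing A
  let u : C⋆ᵐᵒᵈ(A, ι → A) := (equiv A (ι → A)).symm fun i => star (y i)
  let v : C⋆ᵐᵒᵈ(A, ι → A) := (equiv A (ι → A)).symm x
  have huv : ⟪u, v⟫_A = ∑ i, x i * y i := by simp [pi_inner, inner_def, u, v]
  calc ‖∑ i, x i * y i‖ ^ 2 = ‖⟪u, v⟫_A‖ ^ 2 := by rw [huv]
    _ ≤ (‖u‖ * ‖v‖) ^ 2 := by gcongr; exact CStarModule.norm_inner_le _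
    _ = ‖∑ i, x i * star (x i)‖ * ‖∑ i, star (y i) * y i‖ := by
      rw [mul_pow, mul_comm, pi_norm_sq, pi_norm_sq]
      simp [inner_def, u, v]

theorem CStarAlgebra.norm_sum_smul_mul_sq_le (p : ι → ℝ) (hp : ∀ i, 0 ≤ p i) (x y : ι → A) :
    ‖∑ i, p i • (x i * y i)‖ ^ 2
      ≤ ‖∑ i, p i • (x i * star (x i))‖ * ‖∑ i, p i • (star (y i) * y i)‖ := by
  have hsqrt (i : ι) (u w : A) : (√(p i) • u) * (√(p i) • w) = p i • (u * w) := by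
    rw [smul_mul_smul_comm, Real.mul_self_sqrt (hp i)]
  simpa only [star_smul, star_trivial, hsqrt] using
    norm_sum_mul_sq_le (fun i => √(p i) • x i) (fun i => √(p i) • y i)

end CauchySchwarz

/-- If `‖aᵢ − a‖ ≤ r` and `‖bᵢ − b‖ ≤ s` for all `i`, then
`‖Σᵢ pᵢaᵢbᵢ − (Σᵢ pᵢaᵢ)(Σᵢ pᵢbᵢ)‖ ≤ rs` in a C*-algebra. -/
theorem stmt16 {A : Type*} [CStarAlgebra A]
    (n : ℕ) (p : Fin n → ℝ) (hp : ∀ i, 0 ≤ p i) (hp1 : ∑ i, p i = 1)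
    (a b : A) (av bv : Fin n → A) (r s : ℝ) (hr : 0 ≤ r) (hs : 0 ≤ s)
    (ha : ∀ i, ‖av i - a‖ ≤ r) (hb : ∀ i, ‖bv i - b‖ ≤ s) :
    ‖∑ i, p i • (av i * bv i) - (∑ i, p i • av i) * (∑ i, p i • bv i)‖ ≤ r * s := by
  let _ := CStarAlgebra.spectralOrder A
  have _ := CStarAlgebra.spectralOrderedRing A
  set m := ∑ i, p i • bv i
  have hx : ‖∑ i, p i • ((av i - a) * star (av i - a))‖ ≤ r * r :=
    norm_sum_smul_le_of_norm_le p hp hp1 _ fun i => by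
      rw [CStarRing.norm_self_mul_star]; exact mul_self_le_mul_self (norm_nonneg _) (ha i)
  have hy : ‖∑ i, p i • (star (bv i - m) * (bv i - m))‖ ≤ s * s := by
    refine (CStarAlgebra.norm_le_norm_of_nonneg_of_le
      (sum_nonneg fun i _ => smul_nonneg (hp i) (star_mul_self_nonneg _))
      (sum_smul_star_sub_sum_mul_le p hp1 b bv)).trans ?_
    refine norm_sum_smul_le_of_norm_le p hp hp1 _ fun i => ?_
    rw [CStarRing.norm_star_mul_self]; exact mul_self_le_mul_self (norm_nonneg _) (hb i)
  rw [sum_smul_mul_sub_mul_sum_smul p hp1 a, ← pow_le_pow_iff_left₀ (norm_nonneg _)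
    (mul_nonneg hr hs) two_ne_zero]
  calc _ ≤ _ := CStarAlgebra.norm_sum_smul_mul_sq_le p hp _ _
    _ ≤ (r * r) * (s * s) := mul_le_mul hx hy (norm_nonneg _) (mul_self_nonneg r)
    _ = (r * s) ^ 2 := by ring
end

section
/- Let aᵢ, bᵢ be real numbers with a ≤ aᵢ ≤ A and b ≤ bᵢ ≤ B for i = 1,…,n. Then |(1/n) Σᵢ aᵢbᵢ − ((1/n) Σᵢ aᵢ)((1/n) Σᵢ bᵢ)| ≤ (1/4)(A − a)(B − b). -/
lemma gruss_var_aux (n : ℕ) (a A : ℝ) (av : Fin n → ℝ)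
    (ha : ∀ i, a ≤ av i ∧ av i ≤ A) :
    ∑ i, ((n : ℝ) * av i - ∑ j, av j) ^ 2 ≤ (1 / 4) * (n : ℝ) ^ 3 * (A - a) ^ 2 := by
  set m : ℝ := (n : ℝ) with hm
  have hm0 : (0 : ℝ) ≤ m := Nat.cast_nonneg n
  set Sa : ℝ := ∑ j, av j with hSa
  set Saa : ℝ := ∑ j, av j ^ 2 with hSaa
  have hexp : ∑ i, (m * av i - Sa) ^ 2 = m ^ 2 * Saa - m * Sa ^ 2 := by
    have : ∀ i : Fin n, (m * av i - Sa) ^ 2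
        = m ^ 2 * av i ^ 2 - 2 * m * Sa * av i + Sa ^ 2 := by intro i; ring
    rw [Finset.sum_congr rfl fun i _ => this i]
    rw [Finset.sum_add_distrib, Finset.sum_sub_distrib, ← Finset.mul_sum, ← Finset.mul_sum,
      Finset.sum_const, Finset.card_fin, nsmul_eq_mul, ← hSa, ← hSaa, ← hm]
    ring
  have hnn : 0 ≤ ∑ i, (A - av i) * (av i - a) := by
    apply Finset.sum_nonneg
    intro i _
    exact mul_nonneg (by linarith [(ha i).2]) (by linarith [(ha i).1])
  have hexp2 : ∑ i, (A - av i) * (av i - a) = A * Sa - Saa - m * A * a + a * Sa := by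
    have : ∀ i : Fin n, (A - av i) * (av i - a)
        = A * av i - av i ^ 2 - A * a + a * av i := by intro i; ring
    rw [Finset.sum_congr rfl fun i _ => this i]
    rw [Finset.sum_add_distrib, Finset.sum_sub_distrib, Finset.sum_sub_distrib,
      ← Finset.mul_sum, ← Finset.mul_sum, ← Finset.mul_sum, Finset.sum_const,
      Finset.card_fin, nsmul_eq_mul, ← hSa, ← hSaa, ← hm]
    ring
  rw [hexp]
  have h1 : 0 ≤ m ^ 2 * (A * Sa - Saa - m * A * a + a * Sa) := by
    rw [← hexp2]; positivity
  have h2 : 0 ≤ m * (Sa - m * (A + a) / 2) ^ 2 := by positivity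
  nlinarith [h1, h2]

/-- Discrete Grüss inequality: if `a ≤ aᵢ ≤ A` and `b ≤ bᵢ ≤ B` then
`|(1/n)Σ aᵢbᵢ − ((1/n)Σ aᵢ)((1/n)Σ bᵢ)| ≤ (1/4)(A − a)(B − b)`. -/
theorem stmt19 (n : ℕ) (hn : 1 ≤ n) (a A b B : ℝ) (av bv : Fin n → ℝ)
    (ha : ∀ i, a ≤ av i ∧ av i ≤ A) (hb : ∀ i, b ≤ bv i ∧ bv i ≤ B) :
    |(1 / (n : ℝ)) * ∑ i, av i * bv i -
        ((1 / (n : ℝ)) * ∑ i, av i) * ((1 / (n : ℝ)) * ∑ i, bv i)| ≤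
      (1 / 4) * (A - a) * (B - b) := by
  set m : ℝ := (n : ℝ) with hm
  have hm0 : (0 : ℝ) < m := Nat.cast_pos.mpr hn
  set Sa : ℝ := ∑ j, av j with hSa
  set Sb : ℝ := ∑ j, bv j with hSb
  set Sab : ℝ := ∑ j, av j * bv j with hSab
  set P : ℝ := ∑ i, (m * av i - Sa) * (m * bv i - Sb) with hP
  have hPexp : P = m ^ 2 * Sab - m * Sa * Sb := by
    rw [hP]
    have : ∀ i : Fin n, (m * av i - Sa) * (m * bv i - Sb)
        = m ^ 2 * (av i * bv i) - m * Sb * av i - m * Sa * bv i + Sa * Sb := by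
      intro i; ring
    rw [Finset.sum_congr rfl fun i _ => this i]
    rw [Finset.sum_add_distrib, Finset.sum_sub_distrib, Finset.sum_sub_distrib,
      ← Finset.mul_sum, ← Finset.mul_sum, ← Finset.mul_sum, Finset.sum_const,
      Finset.card_fin, nsmul_eq_mul, ← hSa, ← hSb, ← hSab, ← hm]
    ring
  have hCS : P ^ 2 ≤ (∑ i, (m * av i - Sa) ^ 2) * ∑ i, (m * bv i - Sb) ^ 2 := by
    rw [hP]
    exact Finset.sum_mul_sq_le_sq_mul_sq _ _ _
  have hQa := gruss_var_aux n a A av ha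
  have hQb := gruss_var_aux n b B bv hb
  rw [← hm, ← hSa] at hQa
  rw [← hm, ← hSb] at hQb
  have hQa0 : (0:ℝ) ≤ ∑ i, (m * av i - Sa) ^ 2 := Finset.sum_nonneg fun i _ => sq_nonneg _
  have hQb0 : (0:ℝ) ≤ ∑ i, (m * bv i - Sb) ^ 2 := Finset.sum_nonneg fun i _ => sq_nonneg _
  have i0 : Fin n := ⟨0, hn⟩
  have hAa : 0 ≤ A - a := by linarith [(ha i0).1, (ha i0).2]
  have hBb : 0 ≤ B - b := by linarith [(hb i0).1, (hb i0).2]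
  have hPsq : P ^ 2 ≤ ((1/4) * m ^ 3 * ((A - a) * (B - b))) ^ 2 := by
    calc P ^ 2 ≤ (∑ i, (m * av i - Sa) ^ 2) * ∑ i, (m * bv i - Sb) ^ 2 := hCS
    _ ≤ ((1/4) * m ^ 3 * (A - a) ^ 2) * ((1/4) * m ^ 3 * (B - b) ^ 2) :=
        mul_le_mul hQa hQb hQb0 (le_trans hQa0 hQa)
    _ = ((1/4) * m ^ 3 * ((A - a) * (B - b))) ^ 2 := by ring
  have hR0 : 0 ≤ (1/4) * m ^ 3 * ((A - a) * (B - b)) := by positivity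
  have hPabs : |P| ≤ (1/4) * m ^ 3 * ((A - a) * (B - b)) := by
    have := Real.sqrt_le_sqrt hPsq
    rwa [Real.sqrt_sq_eq_abs, Real.sqrt_sq hR0] at this
  have hEq : (1 / m) * Sab - ((1 / m) * Sa) * ((1 / m) * Sb) = P / m ^ 3 := by
    rw [hPexp]; field_simp
  rw [hEq, abs_div, abs_of_pos (by positivity : (0:ℝ) < m ^ 3), div_le_iff₀ (by positivity)]
  calc |P| ≤ (1/4) * m ^ 3 * ((A - a) * (B - b)) := hPabs
  _ = 1 / 4 * (A - a) * (B - b) * m ^ 3 := by ring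
end
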